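/- Fix an integer n ≥ 1, ε ∈ ℝ, an open interval I ⊆ ℝ, a smooth function ψ : I → ℝ, and smooth maps B, R : I → (n×n real matrices) satisfying the Riccati equation B' + B² + R = 0 on I. Set B_ε := e^{(2(1−ε)/n)ψ}·B − (ψ*/n)·Iₙ, θ_ε := tr(B_ε), σ_ε := B_ε − (θ_ε/n)·Iₙ, and Ric₀ := tr(R) + ψ'' + ψ'²/n. Then the weighted Raychaudhuri equation θ_ε* + (2ε/n)·ψ*·θ_ε + θ_ε²/n + tr(σ_ε²) + e^{(4(1−ε)/n)ψ}·Ric₀ = 0 holds on I. -/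

import Mathlib

attribute [local instance] Matrix.normedAddCommGroup Matrix.normedSpace

/-- Derivative with respect to the `ε`-proper time, scalar version:
`f* = e^{(2(1−ε)/n)ψ} · f'`. -/
noncomputable def sstar (n : ℕ) (ε : ℝ) (ψ : ℝ → ℝ) (f : ℝ → ℝ) : ℝ → ℝ :=
  fun t => Real.exp (2 * (1 - ε) / (n : ℝ) * ψ t) * deriv f t

/-- weighted Raychaudhuri equation, `N = 0` case of Theorem 5.7.
If `B' + B² + R = 0` on the open interval `I`, `B_ε = e^{(2(1−ε)/n)ψ}·B − (ψ*/n)·Iₙ`,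
`θ_ε = tr B_ε`, `σ_ε = B_ε − (θ_ε/n)·Iₙ`, and `Ric₀ = tr R + ψ'' + ψ'²/n`, then
`θ_ε* + (2ε/n)·ψ*·θ_ε + θ_ε²/n + tr(σ_ε²) + e^{(4(1−ε)/n)ψ}·Ric₀ = 0` on `I`. -/
theorem weighted_raychaudhuri_equation_N_zero (n : ℕ) (hn : 1 ≤ n) (ε : ℝ)
    (I : Set ℝ) (hIopen : IsOpen I) (hIinterval : I.OrdConnected)
    (ψ : ℝ → ℝ) (B R : ℝ → Matrix (Fin n) (Fin n) ℝ)
    (hψ : ContDiffOn ℝ (⊤ : ℕ∞) ψ I) (hB : ContDiffOn ℝ (⊤ : ℕ∞) B I) (hR : ContDiffOn ℝ (⊤ : ℕ∞) R I)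
    (hRiccati : ∀ t ∈ I, deriv B t + B t * B t + R t = 0)
    (Bε : ℝ → Matrix (Fin n) (Fin n) ℝ)
    (hBε : ∀ t, Bε t = Real.exp (2 * (1 - ε) / (n : ℝ) * ψ t) • B t
      - (sstar n ε ψ ψ t / (n : ℝ)) • (1 : Matrix (Fin n) (Fin n) ℝ))
    (θε : ℝ → ℝ) (hθε : ∀ t, θε t = (Bε t).trace)
    (σε : ℝ → Matrix (Fin n) (Fin n) ℝ)
    (hσε : ∀ t, σε t = Bε t - (θε t / (n : ℝ)) • (1 : Matrix (Fin n) (Fin n) ℝ))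
    (Ric₀ : ℝ → ℝ)
    (hRic₀ : ∀ t, Ric₀ t = (R t).trace + deriv (deriv ψ) t + (deriv ψ t) ^ 2 / (n : ℝ)) :
    ∀ t ∈ I,
      sstar n ε ψ θε t + 2 * ε / (n : ℝ) * sstar n ε ψ ψ t * θε t
        + θε t ^ 2 / (n : ℝ) + (σε t * σε t).trace
        + Real.exp (4 * (1 - ε) / (n : ℝ) * ψ t) * Ric₀ t = 0 := by
  intro t ht
  have hn0 : (n : ℝ) ≠ 0 := Nat.cast_ne_zero.mpr (by omega)
  have hmem : I ∈ nhds t := hIopen.mem_nhds ht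
  have hψd : DifferentiableAt ℝ ψ t := (hψ.contDiffAt hmem).differentiableAt (by simp)
  have hψ'c : ContDiffOn ℝ (⊤ : ℕ∞) (deriv ψ) I := hψ.deriv_of_isOpen hIopen (by simp)
  have hψ'd : DifferentiableAt ℝ (deriv ψ) t := (hψ'c.contDiffAt hmem).differentiableAt (by simp)
  have hBd : DifferentiableAt ℝ B t := (hB.contDiffAt hmem).differentiableAt (by simp)
  set c : ℝ := 2 * (1 - ε) / (n : ℝ) with hc
  have hE : HasDerivAt (fun s => Real.exp (c * ψ s)) (Real.exp (c * ψ t) * (c * deriv ψ t)) t :=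
    (hψd.hasDerivAt.const_mul c).exp
  have htr : HasDerivAt (fun s => (B s).trace) ((deriv B t).trace) t := by
    have h2 := ((Matrix.traceLinearMap (Fin n) ℝ ℝ).toContinuousLinearMap.hasFDerivAt).comp_hasDerivAt t hBd.hasDerivAt
    exact h2
  have hθfun : θε = fun s => Real.exp (c * ψ s) * (B s).trace - Real.exp (c * ψ s) * deriv ψ s := by
    funext s
    rw [hθε s, hBε s]
    simp only [sstar, Matrix.trace_sub, Matrix.trace_smul, Matrix.trace_one, smul_eq_mul, ← hc,
      Fintype.card_fin]
    field_simp
  have hθd : HasDerivAt θε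
      (Real.exp (c * ψ t) * (c * deriv ψ t) * (B t).trace + Real.exp (c * ψ t) * (deriv B t).trace
        - (Real.exp (c * ψ t) * (c * deriv ψ t) * deriv ψ t
          + Real.exp (c * ψ t) * deriv (deriv ψ) t)) t := by
    rw [hθfun]
    exact (hE.mul htr).sub (hE.mul hψ'd.hasDerivAt)
  have hBRic : deriv B t = -(B t * B t) - R t := by
    have h := hRiccati t ht
    rw [add_assoc] at h
    have h2 := eq_neg_of_add_eq_zero_left h
    rw [h2, neg_add, ← sub_eq_add_neg]
  have htrR : (deriv B t).trace = -(B t * B t).trace - (R t).trace := by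
    rw [hBRic]; simp [Matrix.trace_sub, Matrix.trace_neg]
  have hθt : θε t = Real.exp (c * ψ t) * (B t).trace - Real.exp (c * ψ t) * deriv ψ t := by
    rw [hθfun]
  have hσt : σε t = Real.exp (c * ψ t) • B t
      - (Real.exp (c * ψ t) * (B t).trace / (n : ℝ)) • (1 : Matrix (Fin n) (Fin n) ℝ) := by
    rw [hσε t, hBε t, hθt, sub_sub, ← add_smul]
    congr 2
    simp only [sstar, ← hc]
    field_simp
    ring
  have htrσ : (σε t * σε t).trace
      = Real.exp (c * ψ t) ^ 2 * (B t * B t).trace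
        - Real.exp (c * ψ t) ^ 2 * (B t).trace ^ 2 / (n : ℝ) := by
    rw [hσt]
    simp only [Matrix.sub_mul, Matrix.mul_sub, Matrix.smul_mul, Matrix.mul_smul,
      Matrix.trace_sub, Matrix.trace_smul, Matrix.trace_one, smul_smul, Matrix.one_mul,
      Matrix.mul_one, smul_eq_mul, Fintype.card_fin]
    field_simp
    ring
  have hexp : Real.exp (4 * (1 - ε) / (n : ℝ) * ψ t) = Real.exp (c * ψ t) * Real.exp (c * ψ t) := by
    rw [← Real.exp_add]; congr 1; rw [hc]; ring
  simp only [sstar, ← hc]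
  rw [hθd.deriv, htrR, hθt, htrσ, hexp, hRic₀ t]
  generalize Real.exp (c * ψ t) = e
  rw [hc]
  field_simp
  ring
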